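/- Let m,n ∈ ℤ with 3 ∣ m+n. Then for every x ∈ ℝ² and every p ∈ ℤ: U_{m,n}(R₁x) = U_{m,n}(x), U_{m,n}(R₂x) = U_{m,n}(x), and U_{m,n}(x + p·(e+ω)) = U_{m,n}(x), where R₁(x,y) = (x,−y), R₂(x,y) = ((−x + √3·y)/2, (√3·x + y)/2), e = (1,0) and ω = (1/2, √3/2). (Equivalently, U_{m,n}(gx + p(e+ω)) = U_{m,n}(x) for every g in the group generated by R₁ and R₂.) -/

import Mathlib

noncomputable section

/-- The frequency vector `k_{m,n}`. -/
def kvec (m n : ℤ) : ℝ × ℝ :=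
  (2 * Real.pi / 3 * m, 2 * Real.pi / 3 * ((2 * (n : ℝ) - m) / Real.sqrt 3))

/-- The exponential `e_{m,n}(x) = exp(i k_{m,n} · x)`. -/
def efun (m n : ℤ) (x : ℝ × ℝ) : ℂ :=
  Complex.exp (Complex.I * ((((kvec m n).1 * x.1 + (kvec m n).2 * x.2 : ℝ)) : ℂ))

/-- The Neumann trigonometric eigenfunction `U_{m,n}`. -/
def Ufun (m n : ℤ) (x : ℝ × ℝ) : ℂ :=
  efun m n x + efun m (m - n) x + efun (-n) (m - n) x + efun (-n) (-m) x
    + efun (n - m) (-m) x + efun (n - m) n x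

/-- Reflection across the `x`-axis. -/
def R₁ (p : ℝ × ℝ) : ℝ × ℝ := (p.1, -p.2)

/-- Reflection across the line spanned by `(1/2, √3/2)`. -/
def R₂ (p : ℝ × ℝ) : ℝ × ℝ :=
  ((-p.1 + Real.sqrt 3 * p.2) / 2, (Real.sqrt 3 * p.1 + p.2) / 2)

/-- The vector `e = (1,0)`. -/
def evec : ℝ × ℝ := (1, 0)

/-- The vector `ω = (1/2, √3/2)`. -/
def ωvec : ℝ × ℝ := (1 / 2, Real.sqrt 3 / 2)

/-!
The reflections act on the exponentials through their frequencies, `e_{m,n} ∘ R₁ = e_{m,m-n}` and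
`e_{m,n} ∘ R₂ = e_{n-m,n}`, and these index maps permute the six pairs defining `U_{m,n}`.
Translation by `e + ω` multiplies `e_{m,n}` by `exp (2πi (m+n)/3)`; each of the six pairs has
index sum `≡ ±(m+n) (mod 3)`, so all these factors are `1` when `3 ∣ m + n`.
-/

def phase (m n : ℤ) (x : ℝ × ℝ) : ℝ := (kvec m n).1 * x.1 + (kvec m n).2 * x.2

lemma efun_eq_exp_phase (m n : ℤ) (x : ℝ × ℝ) :
    efun m n x = Complex.exp (phase m n x * Complex.I) := by
  rw [mul_comm]
  rfl

lemma phase_R₁ (m n : ℤ) (x : ℝ × ℝ) : phase m n (R₁ x) = phase m (m - n) x := by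
  simp only [phase, kvec, R₁]
  push_cast
  ring

lemma phase_R₂ (m n : ℤ) (x : ℝ × ℝ) : phase m n (R₂ x) = phase (n - m) n x := by
  have hsqrt3 : Real.sqrt 3 * Real.sqrt 3 = 3 := Real.mul_self_sqrt (by norm_num)
  simp only [phase, kvec, R₂]
  push_cast
  field_simp
  linear_combination (m * x.2 : ℝ) * hsqrt3

lemma phase_add_smul_evec_add_ωvec (m n : ℤ) (x : ℝ × ℝ) (t : ℝ) :
    phase m n (x + t • (evec + ωvec)) = phase m n x + t * (m + n) / 3 * (2 * Real.pi) := by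
  simp only [phase, kvec, evec, ωvec, Prod.fst_add, Prod.snd_add, Prod.smul_fst, Prod.smul_snd,
    smul_eq_mul]
  field_simp
  ring

lemma efun_R₁ (m n : ℤ) (x : ℝ × ℝ) : efun m n (R₁ x) = efun m (m - n) x := by
  rw [efun_eq_exp_phase, efun_eq_exp_phase, phase_R₁]

lemma efun_R₂ (m n : ℤ) (x : ℝ × ℝ) : efun m n (R₂ x) = efun (n - m) n x := by
  rw [efun_eq_exp_phase, efun_eq_exp_phase, phase_R₂]

lemma efun_add_int_smul_evec_add_ωvec {m n : ℤ} (hmn : (3 : ℤ) ∣ m + n) (x : ℝ × ℝ) (p : ℤ) :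
    efun m n (x + (p : ℝ) • (evec + ωvec)) = efun m n x := by
  obtain ⟨d, hd⟩ := hmn
  have hphase : phase m n (x + (p : ℝ) • (evec + ωvec))
      = phase m n x + (p * d : ℤ) * (2 * Real.pi) := by
    rw [phase_add_smul_evec_add_ωvec, ← Int.cast_add, hd]
    push_cast
    ring
  rw [efun_eq_exp_phase, efun_eq_exp_phase, hphase]
  exact_mod_cast Complex.exp_mul_I_periodic.int_mul (p * d) (phase m n x : ℂ)

theorem Ufun_invariance (m n : ℤ) (hmn : (3 : ℤ) ∣ m + n) (x : ℝ × ℝ) (p : ℤ) :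
    Ufun m n (R₁ x) = Ufun m n x ∧ Ufun m n (R₂ x) = Ufun m n x ∧
      Ufun m n (x + (p : ℝ) • (evec + ωvec)) = Ufun m n x := by
  refine ⟨?_, ?_, ?_⟩
  · simp only [Ufun, efun_R₁]
    ring_nf
  · simp only [Ufun, efun_R₂]
    ring_nf
  · simp (disch := omega) only [Ufun, efun_add_int_smul_evec_add_ωvec]

end
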